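/- Let A be a PVMD such that for every finitely generated nonzero ideal I of A there exist n ≥ 1 and b ∈ A with Iⁿ ⊆ bA ⊆ I_v. Then A is globally perinormal. -/

import Mathlib

/-!
Let `B` be a going-down overring of `A`. Since `A` is a PVMD, for every `x` the fractional ideal
`H = A + xA` has a finitely generated `E ⊆ A` with `(HE)_v = A`.

First, `B ⊆ A_P` for every prime `N` of `B` and `P = N ∩ A`. Otherwise the ideal of denominators
of some `b ∈ B` lies in `P`, hence so does a minimal prime `Q` over it, and going down makes `Q`
contracted from `B`. This puts `(A + bA)E` inside `Q`. But a finitely generated ideal inside a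
minimal prime of the denominators of `b` is never `v`-trivial: a power of it, times some `s ∉ Q`,
multiplies `b` into `A`. Localizing at the maximal ideals of `B` then shows that `B` contains the
`v`-closure of each finitely generated `A`-submodule of `B`.

Now apply the hypothesis to `E`: `E^n ⊆ sA ⊆ E_v`. Then `sx ∈ A` because `xE ⊆ A`, and
`s⁻¹ ∈ (E^n)⁻¹ ⊆ (H^n)_v ⊆ B`. So every element of `B` is a fraction whose denominator is a unit
of `B`, i.e. `B` is a ring of fractions of `A`.
-/

open scoped nonZeroDivisors

section Defs

variable (A : Type*) [CommRing A] [IsDomain A]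

/-- The localization of `A` at the prime `P`, realized as a subset of the `A`-algebra `K`. -/
def locSet (K : Type*) [CommRing K] [Algebra A K] (P : Ideal A) : Set K :=
  {x | ∃ a s : A, s ∉ P ∧ x * algebraMap A K s = algebraMap A K a}

/-- `P` is a valued prime of `A` if `A_P` is a valuation domain. -/
def ValuedPrime (P : Ideal A) : Prop :=
  ∃ h : P.IsPrime, ValuationRing (Localization.AtPrime P)

/-- `A` is an essential domain if it is the intersection of its localizations at valued primes. -/
def IsEssential : Prop :=
  Set.range (algebraMap A (FractionRing A)) =
    ⋂ P ∈ {P : Ideal A | ValuedPrime A P}, locSet A (FractionRing A) P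

/-- An overring `B` of `A` is a lying over overring if `Spec B → Spec A` is surjective. -/
def LyingOverOverring (B : Subalgebra A (FractionRing A)) : Prop :=
  ∀ P : Ideal A, P.IsPrime → ∃ Q : Ideal B, Q.IsPrime ∧ Q.comap (algebraMap A B) = P

/-- An overring `B` of `A` is a going down overring if going down holds for `A ⊆ B`. -/
def GoingDownOverring (B : Subalgebra A (FractionRing A)) : Prop :=
  ∀ P' P : Ideal A, P'.IsPrime → P.IsPrime → P' ≤ P →
    ∀ Q : Ideal B, Q.IsPrime → Q.comap (algebraMap A B) = P →
      ∃ Q' : Ideal B, Q'.IsPrime ∧ Q' ≤ Q ∧ Q'.comap (algebraMap A B) = P'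

/-- `A` is perinormal if every going down overring of `A` is a flat `A`-module. -/
def Perinormal : Prop :=
  ∀ B : Subalgebra A (FractionRing A), GoingDownOverring A B → Module.Flat A B

/-- `A` is globally perinormal if every going down overring of `A` is a fraction ring of `A`. -/
def GloballyPerinormal : Prop :=
  ∀ B : Subalgebra A (FractionRing A), GoingDownOverring A B →
    ∃ S : Submonoid A, IsLocalization S B

/-- `A` is a P-domain if `A_P` is a valuation domain for each prime `P` minimal over an ideal
of the form `(Aa : b)`. -/
def IsPDomain : Prop :=
  ∀ P : Ideal A,
    (∃ a b : A, P ∈ ((Ideal.span {a} : Ideal A).colon (Ideal.span {b})).minimalPrimes) →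
      ValuedPrime A P

/-- `A` is a PVMD if for every finitely generated nonzero ideal `I` there is a finitely
generated nonzero ideal `J` with `(IJ)_v` principal. -/
def IsPVMD : Prop :=
  ∀ I : Ideal A, I ≠ ⊥ → I.FG → ∃ J : Ideal A, J ≠ ⊥ ∧ J.FG ∧
    ∃ x : FractionRing A,
      1 / (1 / ((I : FractionalIdeal A⁰ (FractionRing A)) * (J : FractionalIdeal A⁰ (FractionRing A)))) =
        FractionalIdeal.spanSingleton A⁰ x

/-- `A` is treed if incomparable primes of `A` are comaximal. -/
def Treed : Prop :=
  ∀ P Q : Ideal A, P.IsPrime → Q.IsPrime → ¬ P ≤ Q → ¬ Q ≤ P → P ⊔ Q = ⊤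

/-- `A` is a Prüfer domain if all its localizations at maximal ideals are valuation domains. -/
def IsPrueferDom : Prop :=
  ∀ M : Ideal A, M.IsMaximal → ValuedPrime A M

/-- The set of height one primes of `A`. -/
def HtOnePrimes : Set (Ideal A) :=
  {P : Ideal A | P.IsPrime ∧ P ≠ ⊥ ∧ ∀ Q : Ideal A, Q.IsPrime → Q < P → Q = ⊥}

/-- `A` is a generalized Krull domain. -/
def IsGenKrull : Prop :=
  (Set.range (algebraMap A (FractionRing A)) =
      ⋂ P ∈ HtOnePrimes A, locSet A (FractionRing A) P) ∧
  (∀ a : A, a ≠ 0 → {P ∈ HtOnePrimes A | a ∈ P}.Finite) ∧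
  (∀ P ∈ HtOnePrimes A, ValuedPrime A P)

/-- `A` is an almost GCD domain. -/
def IsAGCD : Prop :=
  ∀ x y : A, ∃ n : ℕ, 1 ≤ n ∧
    ∃ z : A, Ideal.span {x ^ n} ⊓ Ideal.span {y ^ n} = Ideal.span {z}

/-- `A` has torsion class group (stated for a PVMD): every finitely generated nonzero
fractional ideal has a power whose `v`-closure is principal. -/
def TorsionClassGroup : Prop :=
  ∀ H : FractionalIdeal A⁰ (FractionRing A), H ≠ 0 →
    (H : Submodule A (FractionRing A)).FG →
      ∃ n : ℕ, 1 ≤ n ∧ ∃ x : FractionRing A,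
        1 / (1 / (H ^ n)) = FractionalIdeal.spanSingleton A⁰ x

/-- An overring `B` of `A` is t-linked over `A`. -/
def TLinked (B : Subalgebra A (FractionRing A)) : Prop :=
  ∀ I : Ideal A, I ≠ ⊥ → I.FG →
    ({x : FractionRing A | ∀ y ∈ I, x * algebraMap A (FractionRing A) y ∈
        Set.range (algebraMap A (FractionRing A))} =
      Set.range (algebraMap A (FractionRing A))) →
    ({x : FractionRing A | ∀ y ∈ I, x * algebraMap A (FractionRing A) y ∈ (B : Set (FractionRing A))} =
      (B : Set (FractionRing A)))

end Defs

theorem Submodule.FG.exists_mem_forall_smul_mem {R M : Type*} [CommSemiring R] [AddCommMonoid M]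
    [Module R M] (S : Submonoid R) {N L : Submodule R M} (hN : N.FG)
    (h : ∀ x ∈ N, ∃ s ∈ S, s • x ∈ L) : ∃ s ∈ S, ∀ x ∈ N, s • x ∈ L := by
  induction N, hN using Submodule.fg_induction with
  | singleton x =>
    obtain ⟨s, hs, hsx⟩ := h x (Submodule.mem_span_singleton_self x)
    refine ⟨s, hs, fun y hy => ?_⟩
    obtain ⟨r, rfl⟩ := Submodule.mem_span_singleton.mp hy
    rw [smul_comm]
    exact L.smul_mem r hsx
  | sup N₁ N₂ _ _ ih₁ ih₂ =>
    obtain ⟨s₁, hs₁, h₁⟩ := ih₁ fun x hx => h x (Submodule.mem_sup_left hx)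
    obtain ⟨s₂, hs₂, h₂⟩ := ih₂ fun x hx => h x (Submodule.mem_sup_right hx)
    refine ⟨s₂ * s₁, S.mul_mem hs₂ hs₁, fun x hx => ?_⟩
    obtain ⟨y₁, hy₁, y₂, hy₂, rfl⟩ := Submodule.mem_sup.mp hx
    rw [smul_add, mul_smul, mul_comm, mul_smul]
    exact L.add_mem (L.smul_mem _ (h₁ y₁ hy₁)) (L.smul_mem _ (h₂ y₂ hy₂))

theorem Ideal.exists_pow_mul_mem_of_le_mem_minimalPrimes {R : Type*} [CommRing R]
    {J Q C : Ideal R} (hQ : Q ∈ J.minimalPrimes) (hC : C.FG) (hCQ : C ≤ Q) :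
    ∃ k, ∃ s ∉ Q, ∀ y ∈ C ^ k, s * y ∈ J := by
  have : Q.IsPrime := hQ.1.1
  let Rq := Localization.AtPrime Q
  have hCJ : C.map (algebraMap R Rq) ≤ (J.map (algebraMap R Rq)).radical := by
    rw [IsLocalization.AtPrime.radical_map_of_mem_minimalPrimes Rq Q J hQ]
    exact Ideal.map_mono hCQ
  obtain ⟨k, hk⟩ := Ideal.exists_pow_le_of_le_radical_of_fg hCJ (hC.map _)
  rw [← Ideal.map_pow] at hk
  obtain ⟨s, hs, hsC⟩ := Submodule.FG.exists_mem_forall_smul_mem Q.primeCompl (L := J)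
    (hC.pow (n := k)) fun y hy =>
      (IsLocalization.algebraMap_mem_map_algebraMap_iff Q.primeCompl Rq J y).mp
        (hk (Ideal.mem_map_of_mem _ hy))
  exact ⟨k, s, hs, hsC⟩

/-- The ideal of denominators `{r | r • x ∈ R}` of `x`. -/
def denominatorIdeal (R : Type*) {S : Type*} [CommSemiring R] [Semiring S] [Algebra R S] (x : S) :
    Ideal R :=
  (1 : Submodule R S).colon {x}

theorem mem_denominatorIdeal {R S : Type*} [CommSemiring R] [Semiring S] [Algebra R S]
    {x : S} {r : R} : r ∈ denominatorIdeal R x ↔ ∃ a : R, algebraMap R S a = r • x := by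
  rw [denominatorIdeal, Submodule.mem_colon_singleton, Submodule.mem_one]

theorem Subalgebra.pow_le_toSubmodule {R S : Type*} [CommSemiring R] [Semiring S] [Algebra R S]
    (B : Subalgebra R S) {H : Submodule R S} (h : H ≤ Subalgebra.toSubmodule B) (n : ℕ) :
    H ^ n ≤ Subalgebra.toSubmodule B := by
  induction n with
  | zero => exact Submodule.one_le.mpr B.one_mem
  | succ n ih =>
    exact pow_succ H n ▸ Submodule.mul_le.mpr fun x hx y hy => B.mul_mem (ih hx) (h hy)

theorem isLocalization_of_forall_exists_inv_mem {R K : Type*} [CommRing R] [Field K]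
    [Algebra R K] [IsFractionRing R K] {B : Subalgebra R K}
    (h : ∀ x ∈ B, ∃ s a : R, s ≠ 0 ∧ (algebraMap R K s)⁻¹ ∈ B ∧
      algebraMap R K s * x = algebraMap R K a) :
    IsLocalization ((IsUnit.submonoid B).comap (algebraMap R B)) B where
  map_units s := s.2
  surj z := by
    obtain ⟨s, a, hs0, hsinv, hsa⟩ := h z z.2
    have hs : algebraMap R K s ≠ 0 := (map_ne_zero_iff _ (IsFractionRing.injective R K)).mpr hs0
    refine ⟨(a, ⟨s, isUnit_iff_exists_inv.mpr ⟨⟨_, hsinv⟩, Subtype.ext (mul_inv_cancel₀ hs)⟩⟩),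
      Subtype.ext ?_⟩
    exact (mul_comm _ _).trans hsa
  exists_of_eq h := ⟨1, by rw [IsFractionRing.injective R K (congrArg Subtype.val h)]⟩

namespace FractionalIdeal

theorem fg_one_add_spanSingleton {R P : Type*} [CommRing R] [CommRing P] [Algebra R P]
    (S : Submonoid R) [IsLocalization S P] (x : P) :
    ((1 + spanSingleton S x : FractionalIdeal S P) : Submodule R P).FG := by
  rw [coe_add, coe_one, coe_spanSingleton, Submodule.one_eq_span]
  exact (Submodule.fg_span_singleton 1).sup (Submodule.fg_span_singleton x)

variable {R K : Type*} [CommRing R] [IsDomain R] [Field K] [Algebra R K] [IsFractionRing R K]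

instance : NoZeroDivisors (FractionalIdeal R⁰ K) :=
  Function.Injective.noZeroDivisors _ coeToSubmodule_injective coe_zero coe_mul

/-- The divisorial closure `X_v = (X⁻¹)⁻¹`. -/
noncomputable def vClosure (X : FractionalIdeal R⁰ K) : FractionalIdeal R⁰ K := 1 / (1 / X)

theorem one_div_ne_zero {X : FractionalIdeal R⁰ K} (hX : X ≠ 0) : 1 / X ≠ 0 := by
  obtain ⟨d, hd, hdX⟩ := X.isFractional
  have hd0 : algebraMap R K d ≠ 0 :=
    IsFractionRing.to_map_ne_zero_of_mem_nonZeroDivisors hd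
  have hdmem : algebraMap R K d ∈ 1 / X := (mem_div_iff_of_ne_zero hX).mpr fun y hy => by
    obtain ⟨c, hc⟩ := hdX y hy
    exact (mem_one_iff _).mpr ⟨c, by rw [hc, Algebra.smul_def]⟩
  exact fun h => hd0 ((eq_zero_iff.mp h) _ hdmem)

theorem one_div_le_one_div_of_le {X Y : FractionalIdeal R⁰ K} (hX : X ≠ 0) (h : X ≤ Y) :
    1 / Y ≤ 1 / X := by
  refine (le_div_iff_mul_le hX).mpr ?_
  calc 1 / Y * X ≤ 1 / Y * Y := mul_le_mul_right h _
    _ = Y * (1 / Y) := mul_comm _ _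
    _ ≤ 1 := mul_one_div_le_one

theorem le_vClosure (X : FractionalIdeal R⁰ K) : X ≤ vClosure X := by
  rcases eq_or_ne X 0 with rfl | hX
  · exact zero_le _
  · exact (le_div_iff_mul_le (one_div_ne_zero hX)).mpr mul_one_div_le_one

theorem one_div_vClosure (X : FractionalIdeal R⁰ K) : 1 / vClosure X = 1 / X := by
  rcases eq_or_ne X 0 with rfl | hX
  · simp [vClosure]
  · exact le_antisymm (one_div_le_one_div_of_le hX (le_vClosure X)) (le_vClosure _)

theorem ne_zero_of_one_div_eq_one {X : FractionalIdeal R⁰ K} (h : 1 / X = 1) : X ≠ 0 := by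
  rintro rfl
  rw [div_zero] at h
  exact zero_ne_one h

theorem le_one_of_one_div_eq_one {X : FractionalIdeal R⁰ K} (h : 1 / X = 1) : X ≤ 1 := by
  have : 1 ≤ 1 / X := h.ge
  rwa [le_div_iff_mul_le (ne_zero_of_one_div_eq_one h), one_mul] at this

theorem one_div_mul_eq_one {X Y : FractionalIdeal R⁰ K} (hX : 1 / X = 1) (hY : 1 / Y = 1) :
    1 / (X * Y) = 1 := by
  have hXY : X * Y ≠ 0 :=
    mul_ne_zero (ne_zero_of_one_div_eq_one hX) (ne_zero_of_one_div_eq_one hY)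
  refine le_antisymm (fun z hz => ?_) ?_
  · rw [← hX, ← spanSingleton_le_iff_mem, le_div_iff_mul_le (ne_zero_of_one_div_eq_one hX),
      ← hY, le_div_iff_mul_le (ne_zero_of_one_div_eq_one hY), mul_assoc,
      ← le_div_iff_mul_le hXY, spanSingleton_le_iff_mem]
    exact hz
  · rw [le_div_iff_mul_le hXY, one_mul, ← one_mul 1]
    exact mul_le_mul' (le_one_of_one_div_eq_one hX) (le_one_of_one_div_eq_one hY)

theorem one_div_pow_eq_one {X : FractionalIdeal R⁰ K} (h : 1 / X = 1) (n : ℕ) :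
    1 / X ^ n = 1 := by
  induction n with
  | zero => rw [pow_zero, div_one]
  | succ n ih => rw [pow_succ]; exact one_div_mul_eq_one ih h

theorem one_div_le_vClosure_of_one_div_mul_eq_one {X Y : FractionalIdeal R⁰ K}
    (h : 1 / (X * Y) = 1) : 1 / Y ≤ vClosure X := by
  have hXY := ne_zero_of_one_div_eq_one h
  have hX : X ≠ 0 := left_ne_zero_of_mul hXY
  rw [vClosure, le_div_iff_mul_le (one_div_ne_zero hX)]
  refine ((le_div_iff_mul_le hXY).mpr ?_).trans h.le
  calc 1 / Y * (1 / X) * (X * Y) = (X * (1 / X)) * (Y * (1 / Y)) := by ring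
    _ ≤ 1 * 1 := mul_le_mul' mul_one_div_le_one mul_one_div_le_one
    _ = 1 := mul_one 1

theorem one_div_spanSingleton_mul {c : K} (hc : c ≠ 0) (X : FractionalIdeal R⁰ K) :
    1 / (spanSingleton R⁰ c * X) = spanSingleton R⁰ c⁻¹ * (1 / X) := by
  rcases eq_or_ne X 0 with rfl | hX
  · simp
  have hcX : spanSingleton R⁰ c * X ≠ 0 :=
    mul_ne_zero (spanSingleton_ne_zero_iff.mpr hc) hX
  have hunit : spanSingleton R⁰ c⁻¹ * spanSingleton R⁰ c = (1 : FractionalIdeal R⁰ K) := by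
    rw [spanSingleton_mul_spanSingleton, inv_mul_cancel₀ hc, spanSingleton_one]
  refine le_antisymm ?_ ?_
  · calc 1 / (spanSingleton R⁰ c * X)
        = spanSingleton R⁰ c⁻¹ * (spanSingleton R⁰ c * (1 / (spanSingleton R⁰ c * X))) := by
          rw [← mul_assoc, hunit, one_mul]
      _ ≤ spanSingleton R⁰ c⁻¹ * (1 / X) := by
          refine mul_le_mul_right ((le_div_iff_mul_le hX).mpr ?_) _
          calc spanSingleton R⁰ c * (1 / (spanSingleton R⁰ c * X)) * X
              = spanSingleton R⁰ c * X * (1 / (spanSingleton R⁰ c * X)) := by ring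
            _ ≤ 1 := mul_one_div_le_one
  · rw [le_div_iff_mul_le hcX]
    calc spanSingleton R⁰ c⁻¹ * (1 / X) * (spanSingleton R⁰ c * X)
        = spanSingleton R⁰ c⁻¹ * spanSingleton R⁰ c * (X * (1 / X)) := by ring
      _ ≤ 1 := by rw [hunit, one_mul]; exact mul_one_div_le_one

end FractionalIdeal

open FractionalIdeal

section PVMD

variable {A : Type*} [CommRing A] [IsDomain A]

local notation "K" => FractionRing A

theorem IsPVMD.exists_fg_one_div_mul_eq_one (hA : IsPVMD A) {H : FractionalIdeal A⁰ K}
    (hH : H ≠ 0) (hfg : (H : Submodule A K).FG) :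
    ∃ H' : FractionalIdeal A⁰ K, (H' : Submodule A K).FG ∧ 1 / (H * H') = 1 := by
  obtain ⟨c, I, hc, rfl⟩ := exists_eq_spanSingleton_mul H
  have hφc : algebraMap A K c ≠ 0 := IsFractionRing.to_map_ne_zero_of_mem_nonZeroDivisors
    (mem_nonZeroDivisors_of_ne_zero hc)
  have hI : (I : FractionalIdeal A⁰ K) = spanSingleton A⁰ (algebraMap A K c) *
      (spanSingleton A⁰ (algebraMap A K c)⁻¹ * I) := by
    rw [← mul_assoc, spanSingleton_mul_spanSingleton, mul_inv_cancel₀ hφc, spanSingleton_one,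
      one_mul]
  have hI0 : I ≠ ⊥ := by rintro rfl; simp at hH
  have hIfg : I.FG := by
    rw [← coeIdeal_fg A⁰ (IsFractionRing.injective A K), hI, coe_mul, coe_spanSingleton]
    exact (Submodule.fg_span_singleton _).mul hfg
  obtain ⟨J, hJ0, hJfg, w, hw⟩ := hA I hI0 hIfg
  have hIJ : (I : FractionalIdeal A⁰ K) * J ≠ 0 :=
    mul_ne_zero (coeIdeal_ne_zero.mpr hI0) (coeIdeal_ne_zero.mpr hJ0)
  have hw0 : w ≠ 0 := by
    rintro rfl
    rw [spanSingleton_zero] at hw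
    exact hIJ (le_antisymm (hw ▸ le_vClosure _) (zero_le _))
  refine ⟨spanSingleton A⁰ (algebraMap A K c * w⁻¹) * J, ?_, ?_⟩
  · rw [coe_mul, coe_spanSingleton]
    exact (Submodule.fg_span_singleton _).mul
      ((coeIdeal_fg A⁰ (IsFractionRing.injective A K) J).mpr hJfg)
  · calc 1 / (spanSingleton A⁰ (algebraMap A K c)⁻¹ * I *
          (spanSingleton A⁰ (algebraMap A K c * w⁻¹) * J))
        = 1 / (spanSingleton A⁰ w⁻¹ * (I * J)) := by
          congr 1
          rw [mul_mul_mul_comm, spanSingleton_mul_spanSingleton, inv_mul_cancel_left₀ hφc]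
      _ = 1 := by
          rw [one_div_spanSingleton_mul (inv_ne_zero hw0), ← one_div_vClosure, vClosure, hw,
            one_div_spanSingleton, spanSingleton_mul_spanSingleton, inv_inv, mul_inv_cancel₀ hw0,
            spanSingleton_one]

theorem IsPVMD.exists_fg_one_div_one_add_spanSingleton_mul_eq_one (hA : IsPVMD A) (x : K) :
    ∃ E : Ideal A, E.FG ∧ 1 / ((1 + spanSingleton A⁰ x) * E) = 1 := by
  have hH : (1 : FractionalIdeal A⁰ K) ≤ 1 + spanSingleton A⁰ x := le_self_add
  obtain ⟨H', hH'fg, hH'⟩ :=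
    hA.exists_fg_one_div_mul_eq_one (ne_bot_of_le_ne_bot one_ne_zero hH)
      (fg_one_add_spanSingleton A⁰ x)
  obtain ⟨E, rfl⟩ := le_one_iff_exists_coeIdeal.mp
    ((le_mul_of_one_le_left (zero_le _) hH).trans (le_one_of_one_div_eq_one hH'))
  exact ⟨E, (coeIdeal_fg A⁰ (IsFractionRing.injective A K) E).mp hH'fg, hH'⟩

end PVMD

section Overring

variable {A : Type*} [CommRing A] [IsDomain A]

local notation "K" => FractionRing A
local notation "φ" => algebraMap A K

theorem one_div_ne_one_of_le_mem_minimalPrimes {b : K} {Q C : Ideal A}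
    (hQ : Q ∈ (denominatorIdeal A b).minimalPrimes) (hC : C.FG) (hCQ : C ≤ Q) :
    1 / (C : FractionalIdeal A⁰ K) ≠ 1 := by
  intro h
  obtain ⟨k, s, hsQ, hs⟩ := Ideal.exists_pow_mul_mem_of_le_mem_minimalPrimes hQ hC hCQ
  have hCk := one_div_pow_eq_one h k
  have hsb : φ s * b ∈ 1 / (C : FractionalIdeal A⁰ K) ^ k := by
    rw [mem_div_iff_of_ne_zero (ne_zero_of_one_div_eq_one hCk)]
    intro y hy
    rw [← coeIdeal_pow] at hy
    obtain ⟨c, hc, rfl⟩ := (mem_coeIdeal _).mp hy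
    obtain ⟨a, ha⟩ := mem_denominatorIdeal.mp (hs c hc)
    exact (mem_one_iff _).mpr ⟨a, by rw [ha, Algebra.smul_def, map_mul]; ring⟩
  rw [hCk] at hsb
  obtain ⟨a, ha⟩ := (mem_one_iff _).mp hsb
  exact hsQ (hQ.1.2 (mem_denominatorIdeal.mpr ⟨a, by rw [ha, Algebra.smul_def]⟩))

variable {B : Subalgebra A (FractionRing A)}

theorem GoingDownOverring.subset_locSet (hGD : GoingDownOverring A B) (hA : IsPVMD A)
    (N : Ideal B) [N.IsPrime] : (B : Set K) ⊆ locSet A K (N.comap (algebraMap A B)) := by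
  intro b hb
  by_contra hbP
  set P := N.comap (algebraMap A B)
  have hJP : denominatorIdeal A b ≤ P := fun r hr => by
    by_contra hrP
    obtain ⟨a, ha⟩ := mem_denominatorIdeal.mp hr
    exact hbP ⟨a, r, hrP, by rw [ha, Algebra.smul_def, mul_comm]⟩
  obtain ⟨Q, hQ, hQP⟩ := Ideal.exists_minimalPrimes_le hJP
  obtain ⟨Q', -, -, hQ'⟩ := hGD Q P hQ.1.1 inferInstance hQP N inferInstance rfl
  obtain ⟨E, hEfg, hE⟩ := hA.exists_fg_one_div_one_add_spanSingleton_mul_eq_one b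
  obtain ⟨C, hC⟩ := le_one_iff_exists_coeIdeal.mp (le_one_of_one_div_eq_one hE)
  have hCsum : (C : FractionalIdeal A⁰ K) = E + spanSingleton A⁰ b * E := by
    rw [hC, add_mul, one_mul]
  have hEJ : E ≤ denominatorIdeal A b := fun e he => by
    have hbe : b * φ e ∈ (C : FractionalIdeal A⁰ K) :=
      hCsum ▸ SetLike.le_def.mp le_add_self
        (mem_singleton_mul.mpr ⟨φ e, (mem_coeIdeal _).mpr ⟨e, he, rfl⟩, rfl⟩)
    obtain ⟨a, ha⟩ := (mem_one_iff _).mp (coeIdeal_le_one hbe)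
    exact mem_denominatorIdeal.mpr ⟨a, by rw [ha, Algebra.smul_def, mul_comm]⟩
  -- `Q` is contracted from `B`, so `b * e ∈ A` with `e ∈ Q` forces `b * e ∈ Q`.
  have hbE : ∀ e ∈ E, ∃ a ∈ Q, φ a = b * φ e := fun e he => by
    obtain ⟨a, ha⟩ := mem_denominatorIdeal.mp (hEJ he)
    refine ⟨a, ?_, by rw [ha, Algebra.smul_def, mul_comm]⟩
    have hab : algebraMap A B a = ⟨b, hb⟩ * algebraMap A B e :=
      Subtype.ext (ha.trans (by rw [Algebra.smul_def, mul_comm]; rfl))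
    rw [← hQ', Ideal.mem_comap, hab]
    exact Q'.mul_mem_left _ (Ideal.mem_comap.mp (hQ' ▸ hQ.1.2 (hEJ he)))
  have hCQ : C ≤ Q := by
    rw [← coeIdeal_le_coeIdeal K, hCsum, ← sup_eq_add]
    refine sup_le ((coeIdeal_le_coeIdeal K).mpr (hEJ.trans hQ.1.2)) fun y hy => ?_
    obtain ⟨y', hy', rfl⟩ := mem_singleton_mul.mp hy
    obtain ⟨e, he, rfl⟩ := (mem_coeIdeal _).mp hy'
    obtain ⟨a, haQ, ha⟩ := hbE e he
    exact (mem_coeIdeal _).mpr ⟨a, haQ, ha⟩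
  have hCfg : C.FG := by
    rw [← coeIdeal_fg A⁰ (IsFractionRing.injective A K), hC, coe_mul]
    exact (fg_one_add_spanSingleton A⁰ b).mul
      ((coeIdeal_fg A⁰ (IsFractionRing.injective A K) E).mpr hEfg)
  exact one_div_ne_one_of_le_mem_minimalPrimes hQ hCfg hCQ (hC ▸ hE)

theorem GoingDownOverring.mem_of_mem_vClosure (hGD : GoingDownOverring A B) (hA : IsPVMD A)
    {H : FractionalIdeal A⁰ K} (hfg : (H : Submodule A K).FG)
    (hHB : (H : Submodule A K) ≤ Subalgebra.toSubmodule B) {z : K} (hz : z ∈ vClosure H) :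
    z ∈ B := by
  rcases eq_or_ne H 0 with rfl | hH0
  · have hz0 : z = 0 := by simpa [vClosure] using hz
    exact hz0 ▸ B.zero_mem
  by_contra hzB
  have hD : denominatorIdeal B z ≠ ⊤ := fun h => hzB <| by
    obtain ⟨a, ha⟩ := mem_denominatorIdeal.mp ((Ideal.eq_top_iff_one _).mp h)
    rw [one_smul] at ha
    exact ha ▸ a.2
  obtain ⟨N, hN, hDN⟩ := Ideal.exists_le_maximal _ hD
  obtain ⟨s, hs, hsH⟩ := Submodule.FG.exists_mem_forall_smul_mem
    (N.comap (algebraMap A B)).primeCompl (L := 1) hfg fun h hh => by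
      obtain ⟨a, s, hs, has⟩ := hGD.subset_locSet hA N (hHB hh)
      exact ⟨s, hs, Submodule.mem_one.mpr ⟨a, by rw [← has, Algebra.smul_def, mul_comm]⟩⟩
  have hsH' : φ s ∈ 1 / H := (mem_div_iff_of_ne_zero hH0).mpr fun h hh => by
    obtain ⟨a, ha⟩ := Submodule.mem_one.mp (hsH h hh)
    exact (mem_one_iff _).mpr ⟨a, by rw [ha, Algebra.smul_def]⟩
  obtain ⟨a, ha⟩ := (mem_one_iff _).mp (mul_one_div_le_one (mul_mem_mul hsH' hz))
  exact hs (hDN (mem_denominatorIdeal.mpr ⟨⟨φ a, B.algebraMap_mem a⟩, ha⟩))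

theorem GoingDownOverring.exists_inv_mem_and_mul_eq (hGD : GoingDownOverring A B)
    (hA : IsPVMD A)
    (hcond : ∀ I : Ideal A, I ≠ ⊥ → I.FG → ∃ (n : ℕ) (b : A), I ^ n ≤ Ideal.span {b} ∧
      ((Ideal.span {b} : Ideal A) : FractionalIdeal A⁰ K) ≤ vClosure (I : FractionalIdeal A⁰ K))
    {x : K} (hx : x ∈ B) : ∃ s a : A, s ≠ 0 ∧ (φ s)⁻¹ ∈ B ∧ φ s * x = φ a := by
  set H : FractionalIdeal A⁰ K := 1 + spanSingleton A⁰ x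
  obtain ⟨E, hEfg, hE⟩ := hA.exists_fg_one_div_one_add_spanSingleton_mul_eq_one x
  have hE0 : E ≠ ⊥ := by
    rintro rfl
    exact ne_zero_of_one_div_eq_one hE (by rw [coeIdeal_bot, mul_zero])
  obtain ⟨m, s, hEs, hsE⟩ := hcond E hE0 hEfg
  have hs0 : s ≠ 0 := by
    rintro rfl
    exact pow_ne_zero m hE0 (le_bot_iff.mp (by simpa using hEs))
  have hxE : x ∈ 1 / (E : FractionalIdeal A⁰ K) := by
    rw [← spanSingleton_le_iff_mem, le_div_iff_mul_le (coeIdeal_ne_zero.mpr hE0)]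
    exact (mul_le_mul_left le_add_self _).trans (le_one_of_one_div_eq_one hE)
  have hsx : x * φ s ∈ (1 : FractionalIdeal A⁰ K) := mul_one_div_le_one <|
    mul_mem_mul hxE (hsE ((mem_coeIdeal _).mpr ⟨s, Ideal.mem_span_singleton_self s, rfl⟩))
  -- `(H E)ᵥ = A` turns the inclusion `E ^ m ⊆ s A` into `s⁻¹ ∈ (H ^ m)ᵥ`.
  have hsinv : (φ s)⁻¹ ∈ vClosure (H ^ m) := by
    refine one_div_le_vClosure_of_one_div_mul_eq_one (Y := (E : FractionalIdeal A⁰ K) ^ m)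
      (by rw [← mul_pow]; exact one_div_pow_eq_one hE m) ?_
    rw [mem_div_iff_of_ne_zero (pow_ne_zero m (coeIdeal_ne_zero.mpr hE0))]
    intro y hy
    rw [← coeIdeal_pow] at hy
    obtain ⟨e, he, rfl⟩ := (mem_coeIdeal _).mp hy
    obtain ⟨r, rfl⟩ := Ideal.mem_span_singleton'.mp (hEs he)
    have hφs : φ s ≠ 0 := (map_ne_zero_iff _ (IsFractionRing.injective A K)).mpr hs0
    exact (mem_one_iff _).mpr ⟨r, by rw [map_mul]; field_simp⟩
  have hHB : (H : Submodule A K) ≤ Subalgebra.toSubmodule B := by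
    rw [coe_add, coe_one, coe_spanSingleton]
    exact sup_le (Submodule.one_le.mpr B.one_mem) (Submodule.span_le.mpr (by simpa using hx))
  obtain ⟨a, ha⟩ := (mem_one_iff _).mp hsx
  refine ⟨s, a, hs0, hGD.mem_of_mem_vClosure hA ?_ ?_ hsinv, by rw [ha, mul_comm]⟩
  · rw [coe_pow]
    exact (fg_one_add_spanSingleton A⁰ x).pow m
  · rw [coe_pow]
    exact B.pow_le_toSubmodule hHB m

end Overring

/-- a PVMD with `Iⁿ ⊆ bA ⊆ I_v` for every f.g. nonzero ideal is
globally perinormal. -/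
theorem pvmd_power_principal_globally_perinormal (A : Type*) [CommRing A] [IsDomain A]
    (hA : IsPVMD A)
    (hcond : ∀ I : Ideal A, I ≠ ⊥ → I.FG → ∃ n : ℕ, 1 ≤ n ∧ ∃ b : A,
      I ^ n ≤ Ideal.span {b} ∧
      ((Ideal.span {b} : Ideal A) : FractionalIdeal A⁰ (FractionRing A)) ≤
        1 / (1 / (I : FractionalIdeal A⁰ (FractionRing A)))) :
    GloballyPerinormal A := by
  have hcond' := fun I hI hfg => (hcond I hI hfg).imp fun _ => And.right
  exact fun _ hGD => ⟨_, isLocalization_of_forall_exists_inv_mem fun _ hx =>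
    hGD.exists_inv_mem_and_mul_eq hA hcond' hx⟩
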